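/- Let λ be a partition whose first r rows form a q × r rectangle (so λ_1 = … = λ_r = q) and which has at least one more row with λ_{r+1} < q. Then 2/|λ| · Σ_{b∈λ} ct(b) < q − r. -/

import Mathlib

/-- A partition given as a weakly decreasing list of positive integers. -/
def IsPartition (l : List ℕ) : Prop :=
  l.Pairwise (· ≥ ·) ∧ ∀ x ∈ l, 0 < x

/-- Sum of contents `y - x` over the boxes of the Young diagram of `l`
(boxes in row `x+1` are `(x+1, y+1)` for `y < l[x]`, content `y - x`). -/
def contentSum (l : List ℕ) : ℤ :=
  ∑ x ∈ Finset.range l.length, ∑ y ∈ Finset.range (l.getD x 0), ((y : ℤ) - (x : ℤ))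

/-!
Twice the content sum of a row of length `m` at row index `x` is `m (m - 1) - 2 m x`.
The `r` rows of the rectangle contribute exactly `(q - r) q r`, and a row of length
`0 < m < q` at index `x ≥ r` contributes `m (m - 1) - 2 m x < (q - r) m`, because
`q + r + 2x + 1 - m ≥ 2`. Summing, `2 Σ ct < (q - r) |λ|`.
-/

open Finset

theorem List.sum_range_getD {M : Type*} [AddCommMonoid M] (l : List M) :
    ∑ x ∈ Finset.range l.length, l.getD x 0 = l.sum := by
  induction l with
  | nil => simp
  | cons a l ih =>
    rw [List.length_cons, Finset.sum_range_succ']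
    simp only [List.getD_cons_succ, List.getD_cons_zero, ih, List.sum_cons, add_comm]

lemma two_mul_sum_range_sub (m : ℕ) (c : ℤ) :
    2 * ∑ y ∈ range m, ((y : ℤ) - c) = m * (m - 1) - 2 * m * c := by
  induction m with
  | zero => simp
  | succ n ih =>
    rw [sum_range_succ, mul_add, ih]
    push_cast
    ring

lemma two_mul_contentSum (l : List ℕ) :
    2 * contentSum l = ∑ x ∈ range l.length,
      ((l.getD x 0 : ℤ) * (l.getD x 0 - 1) - 2 * l.getD x 0 * x) := by
  rw [contentSum, mul_sum]
  exact sum_congr rfl fun x _ => two_mul_sum_range_sub _ _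

lemma two_mul_contentSum_replicate_append (q r : ℕ) (t : List ℕ) :
    2 * contentSum (List.replicate r q ++ t) = ((q : ℤ) - r) * (q * r) +
      ∑ x ∈ range t.length,
        ((t.getD x 0 : ℤ) * (t.getD x 0 - 1) - 2 * t.getD x 0 * (r + x)) := by
  have hrect : ∀ n, ∑ x ∈ range n, ((q : ℤ) * (q - 1) - 2 * q * x) =
      ((q : ℤ) - n) * (q * n) := by
    intro n
    induction n with
    | zero => simp
    | succ n ih => rw [sum_range_succ, ih]; push_cast; ring
  rw [two_mul_contentSum, List.length_append, List.length_replicate, sum_range_add, ← hrect r]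
  congr 1
  · refine sum_congr rfl fun x hx => ?_
    rw [List.getD_append _ _ _ _ (by simpa using hx), List.getD_replicate _ (mem_range.mp hx)]
  · refine sum_congr rfl fun x _ => ?_
    rw [List.getD_append_right _ _ _ _ (by simp)]
    simp

lemma row_term_lt {m q : ℕ} (r x : ℕ) (hm : 0 < m) (hmq : m < q) :
    (m : ℤ) * (m - 1) - 2 * m * (r + x) < (q - r) * m := by
  have h : (2 : ℤ) ≤ q + r + 2 * x + 1 - m := by omega
  nlinarith

theorem two_mul_contentSum_lt (q r : ℕ) (t : List ℕ) (htne : t ≠ [])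
    (ht : ∀ m ∈ t, 0 < m ∧ m < q) :
    2 * contentSum (List.replicate r q ++ t) <
      ((q : ℤ) - r) * ((List.replicate r q ++ t).sum : ℤ) := by
  have htail : ∑ x ∈ range t.length,
      ((t.getD x 0 : ℤ) * (t.getD x 0 - 1) - 2 * t.getD x 0 * (r + x)) <
        ((q : ℤ) - r) * t.sum := by
    rw [← List.sum_range_getD t, Nat.cast_sum, mul_sum]
    have hne : (range t.length).Nonempty :=
      nonempty_range_iff.mpr (List.length_pos_iff.mpr htne).ne'
    refine sum_lt_sum_of_nonempty hne fun x hx => ?_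
    have hmem := ht (t.getD x 0) (List.getD_eq_getElem t 0 (mem_range.mp hx) ▸ List.getElem_mem _)
    exact row_term_lt r x hmem.1 hmem.2
  rw [two_mul_contentSum_replicate_append, List.sum_append, List.sum_replicate, smul_eq_mul,
    Nat.cast_add, Nat.cast_mul]
  linear_combination htail

theorem stmt3_general (q r : ℕ) (t : List ℕ)
    (ht : IsPartition t) (htne : t ≠ []) (hlt : t.head htne < q) :
    2 / ((List.replicate r q ++ t).sum : ℚ) * (contentSum (List.replicate r q ++ t) : ℚ) <
      (q : ℚ) - (r : ℚ) := by
  have hrows : ∀ m ∈ t, 0 < m ∧ m < q :=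
    fun m hm => ⟨ht.2 m hm, (ht.1.rel_head hm).trans_lt hlt⟩
  have hsum : (0 : ℚ) < (List.replicate r q ++ t).sum := by
    have := List.le_sum_of_mem (List.mem_append_right (List.replicate r q) (List.head_mem htne))
    exact_mod_cast (ht.2 _ (List.head_mem htne)).trans_le this
  rw [div_mul_eq_mul_div, div_lt_iff₀ hsum]
  have key := (Int.cast_lt (R := ℚ)).mpr (two_mul_contentSum_lt q r t htne hrows)
  rw [Int.cast_mul, Int.cast_mul, Int.cast_sub, Int.cast_ofNat, Int.cast_natCast, Int.cast_natCast,
    Int.cast_natCast] at key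
  linarith

/-- Adding rows strictly below a q × r rectangle gives 2/|λ| Σ ct(b) < q - r. -/
theorem stmt3 (q r : ℕ) (hq : 0 < q) (hr : 0 < r) (t : List ℕ)
    (ht : IsPartition t) (htne : t ≠ []) (hlt : t.head htne < q) :
    2 / ((List.replicate r q ++ t).sum : ℚ) * (contentSum (List.replicate r q ++ t) : ℚ) <
      (q : ℚ) - (r : ℚ) :=
  stmt3_general q r t ht htne hlt
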